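/- Let p be a prime number and let Γ be an abelian group such that the torsion subgroup of Γ is isomorphic, as an abstract abelian group, to a subgroup of (ℚ/ℤ)^n for some positive integer n, and such that dim_ℚ(Γ ⊗_ℤ ℚ) = r is finite. Let Γ[p] = {x ∈ Γ : p·x = 0} and pΓ = {p·x : x ∈ Γ}. Then Γ/pΓ is finite and #(Γ/pΓ) ≤ p^r · #(Γ[p]) ≤ p^{n+r}. -/

import Mathlib

/-!
For a finitely generated abelian group `B ≅ ℤ^s × D` with `D` finite, the structure theorem gives
`#(B/pB) = p^s · #(D/pD) = p^s · #D[p] = p^s · #B[p]`, the middle step because `p` is an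
endomorphism of the finite group `D`. Here `s ≤ rank Γ` and `B[p] ⊆ Γ[p]`, so the image of every
finitely generated subgroup in `Γ/pΓ` has at most `p^r · #Γ[p]` elements; since every finite subset
of `Γ/pΓ` lies in such an image, this bounds `Γ/pΓ` itself. Finally `Γ[p]` embeds into
`((ℚ/ℤ)[p])^n`, which has at most `p^n` elements.
-/

open TensorProduct

universe u v w

theorem AddMonoidHom.index_range_eq_card_ker {G : Type*} [AddGroup G] [Finite G] (f : G →+ G) :
    f.range.index = Nat.card f.ker := by
  have hrange : 0 < Nat.card f.range := Nat.card_pos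
  refine Nat.eq_of_mul_eq_mul_right hrange ?_
  rw [AddSubgroup.index_mul_card, ← AddSubgroup.index_ker f, AddSubgroup.card_mul_index]

theorem rank_fractionRing_tensorProduct (R : Type u) (K : Type v) (M : Type w) [CommRing R]
    [IsDomain R] [Field K] [Algebra R K] [IsFractionRing R K] [AddCommGroup M] [Module R M] :
    Module.rank K (K ⊗[R] M) = Cardinal.lift (Module.rank R M) := by
  rw [IsLocalization.rank_eq K (nonZeroDivisors R) le_rfl]
  have h := IsLocalizedModule.lift_rank_eq (nonZeroDivisors R) (TensorProduct.mk R K M 1) le_rfl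
  rwa [Cardinal.lift_id'.{w, v}, Cardinal.lift_umax.{w, v}] at h

section NsmulKerRange

variable (p : ℕ) {G H : Type*} [AddCommGroup G] [AddCommGroup H]

theorem nsmul_id_prod :
    p • AddMonoidHom.id (G × H) = (p • AddMonoidHom.id G).prodMap (p • AddMonoidHom.id H) :=
  rfl

theorem index_range_nsmul_prod :
    (p • AddMonoidHom.id (G × H)).range.index =
      (p • AddMonoidHom.id G).range.index * (p • AddMonoidHom.id H).range.index := by
  rw [nsmul_id_prod, AddMonoidHom.range_prodMap, AddSubgroup.index_prod]

theorem card_ker_nsmul_prod :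
    Nat.card (p • AddMonoidHom.id (G × H)).ker =
      Nat.card (p • AddMonoidHom.id G).ker * Nat.card (p • AddMonoidHom.id H).ker := by
  rw [nsmul_id_prod, AddMonoidHom.ker_prodMap, ← Nat.card_prod]
  exact Nat.card_congr (AddSubgroup.prodEquiv _ _).toEquiv

theorem map_range_nsmul (e : G ≃+ H) :
    (p • AddMonoidHom.id G).range.map (e : G →+ H) = (p • AddMonoidHom.id H).range := by
  ext y
  constructor
  · rintro ⟨_, ⟨x, rfl⟩, rfl⟩
    exact ⟨e x, (map_nsmul e p x).symm⟩
  · rintro ⟨y, rfl⟩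
    exact ⟨p • e.symm y, ⟨_, rfl⟩, by simp⟩

theorem map_ker_nsmul (e : G ≃+ H) :
    (p • AddMonoidHom.id G).ker.map (e : G →+ H) = (p • AddMonoidHom.id H).ker := by
  ext y
  constructor
  · rintro ⟨x, hx, rfl⟩
    exact (map_nsmul e p x).symm.trans ((congrArg e hx).trans (map_zero e))
  · intro hy
    refine ⟨e.symm y, ?_, e.apply_symm_apply y⟩
    exact (map_nsmul e.symm p y).symm.trans ((congrArg e.symm hy).trans (map_zero e.symm))

theorem index_range_nsmul_congr (e : G ≃+ H) :
    (p • AddMonoidHom.id G).range.index = (p • AddMonoidHom.id H).range.index := by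
  rw [← map_range_nsmul p e, AddSubgroup.index_map_equiv]

theorem card_ker_nsmul_congr (e : G ≃+ H) :
    Nat.card (p • AddMonoidHom.id G).ker = Nat.card (p • AddMonoidHom.id H).ker := by
  rw [← map_ker_nsmul p e, AddSubgroup.card_map_of_injective e.injective]

theorem ker_nsmul_eq_bot [IsAddTorsionFree G] (hp : p ≠ 0) : (p • AddMonoidHom.id G).ker = ⊥ :=
  (AddMonoidHom.ker_eq_bot_iff _).2 (nsmul_right_injective hp)

theorem range_nsmul_pi {ι : Type*} (G : ι → Type*) [∀ i, AddCommGroup (G i)] :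
    (p • AddMonoidHom.id (∀ i, G i)).range =
      AddSubgroup.pi Set.univ fun i => (p • AddMonoidHom.id (G i)).range := by
  ext x
  simp only [AddMonoidHom.mem_range, AddSubgroup.mem_pi, Set.mem_univ, forall_true_left]
  constructor
  · rintro ⟨y, rfl⟩ i
    exact ⟨y i, rfl⟩
  · intro hx
    choose y hy using hx
    exact ⟨y, funext hy⟩

theorem index_range_nsmul_int_pi (ι : Type*) [Fintype ι] :
    (p • AddMonoidHom.id (ι → ℤ)).range.index = p ^ Fintype.card ι := by
  have hℤ : (p • AddMonoidHom.id ℤ).range = AddSubgroup.zmultiples (p : ℤ) := by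
    ext x
    simp [AddSubgroup.mem_zmultiples_iff, mul_comm]
  rw [range_nsmul_pi, AddSubgroup.index_pi, hℤ, Int.index_zmultiples, Int.natAbs_natCast,
    Finset.prod_const, Finset.card_univ]

theorem exists_index_range_nsmul_eq_of_fg [AddGroup.FG G] (hp : p ≠ 0) :
    ∃ s : ℕ, (s : Cardinal) ≤ Module.rank ℤ G ∧
      (p • AddMonoidHom.id G).range.index = p ^ s * Nat.card (p • AddMonoidHom.id G).ker := by
  obtain ⟨s, ι, _, q, hq, k, ⟨e⟩⟩ := AddCommGroup.equiv_free_prod_directSum_zmod G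
  have : ∀ i, NeZero (q i ^ k i) := fun i => ⟨pow_ne_zero _ (hq i).ne_zero⟩
  let D := DirectSum ι fun i => ZMod (q i ^ k i)
  have : Finite D := Finite.of_equiv _ DFinsupp.equivFunOnFintype.symm
  let e' : G ≃+ (Fin s → ℤ) × D := e.trans (Finsupp.addEquivFunOnFinite.prodCongr (.refl D))
  refine ⟨s, ?_, ?_⟩
  · have hinj : Function.Injective (e'.symm.toAddMonoidHom.comp (.inl _ D)).toIntLinearMap :=
      e'.symm.injective.comp (Prod.mk_left_injective 0)
    simpa using LinearMap.lift_rank_le_of_injective _ hinj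
  · rw [index_range_nsmul_congr p e', card_ker_nsmul_congr p e', index_range_nsmul_prod,
      card_ker_nsmul_prod, index_range_nsmul_int_pi, ker_nsmul_eq_bot p hp,
      AddMonoidHom.index_range_eq_card_ker, AddSubgroup.card_bot, Fintype.card_fin, one_mul]

theorem card_ker_nsmul_le_of_injective (f : G →+ H) (hf : Function.Injective f)
    [Finite (p • AddMonoidHom.id H).ker] :
    Finite (p • AddMonoidHom.id G).ker ∧
      Nat.card (p • AddMonoidHom.id G).ker ≤ Nat.card (p • AddMonoidHom.id H).ker := by
  let g : (p • AddMonoidHom.id G).ker → (p • AddMonoidHom.id H).ker := fun x =>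
    ⟨f x.1, (map_nsmul f p x.1).symm.trans ((congrArg f x.2).trans (map_zero f))⟩
  have hg : Function.Injective g := fun x y hxy => Subtype.ext (hf (congrArg Subtype.val hxy))
  exact ⟨Finite.of_injective g hg, Nat.card_le_card_of_injective g hg⟩

theorem finite_quotient_range_nsmul_of_forall_fg {N : ℕ}
    (h : ∀ B : AddSubgroup G, B.FG →
      Finite (B ⧸ (p • AddMonoidHom.id B).range) ∧
        Nat.card (B ⧸ (p • AddMonoidHom.id B).range) ≤ N) :
    Finite (G ⧸ (p • AddMonoidHom.id G).range) ∧
      Nat.card (G ⧸ (p • AddMonoidHom.id G).range) ≤ N := by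
  set V := G ⧸ (p • AddMonoidHom.id G).range
  have hV : Cardinal.mk V ≤ N := Cardinal.card_le_of fun t => by
    let B := AddSubgroup.closure (Quotient.out '' (t : Set V))
    obtain ⟨_, hcard⟩ := h B ((AddSubgroup.fg_iff B).2 ⟨_, rfl, t.finite_toSet.image _⟩)
    let π : B ⧸ (p • AddMonoidHom.id B).range →+ V :=
      QuotientAddGroup.map _ _ B.subtype (by rintro _ ⟨b, rfl⟩; exact ⟨b, rfl⟩)
    let lift : t → B ⧸ (p • AddMonoidHom.id B).range := fun v =>
      QuotientAddGroup.mk ⟨v.1.out, AddSubgroup.subset_closure ⟨v, v.2, rfl⟩⟩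
    have hπ : ∀ v : t, π (lift v) = v := fun v => Quotient.out_eq' v.1
    calc t.card = Nat.card t := (Nat.card_eq_finsetCard t).symm
      _ ≤ Nat.card (B ⧸ (p • AddMonoidHom.id B).range) :=
        Nat.card_le_card_of_injective lift fun x y hxy =>
          Subtype.ext ((hπ x).symm.trans ((congrArg π hxy).trans (hπ y)))
      _ ≤ N := hcard
  have : Finite V := Cardinal.lt_aleph0_iff_finite.1 (hV.trans_lt Cardinal.natCast_lt_aleph0)
  exact ⟨this, by simpa [← Nat.cast_card] using hV⟩

theorem finite_quotient_range_nsmul_of_rank_le (hp : p ≠ 0) {r : ℕ}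
    (hr : Module.rank ℤ G ≤ r) [Finite (p • AddMonoidHom.id G).ker] :
    Finite (G ⧸ (p • AddMonoidHom.id G).range) ∧
      Nat.card (G ⧸ (p • AddMonoidHom.id G).range) ≤
        p ^ r * Nat.card (p • AddMonoidHom.id G).ker := by
  refine finite_quotient_range_nsmul_of_forall_fg p fun B hB => ?_
  have : AddGroup.FG B := (AddGroup.fg_iff_addSubgroup_fg B).2 hB
  obtain ⟨s, hs, hindex⟩ := exists_index_range_nsmul_eq_of_fg p (G := B) hp
  have hsr : s ≤ r := by
    have hB := LinearMap.rank_le_of_injective B.subtype.toIntLinearMap Subtype.val_injective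
    exact_mod_cast hs.trans (hB.trans hr)
  obtain ⟨_, hker⟩ := card_ker_nsmul_le_of_injective p B.subtype Subtype.val_injective
  have hpos : 0 < p ^ s * Nat.card (p • AddMonoidHom.id B).ker :=
    Nat.mul_pos (Nat.pow_pos (Nat.pos_of_ne_zero hp)) Nat.card_pos
  refine ⟨AddSubgroup.index_ne_zero_iff_finite.1 (hindex ▸ hpos.ne'), ?_⟩
  calc Nat.card (B ⧸ (p • AddMonoidHom.id B).range)
      = p ^ s * Nat.card (p • AddMonoidHom.id B).ker := hindex
    _ ≤ p ^ r * Nat.card (p • AddMonoidHom.id G).ker :=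
      Nat.mul_le_mul (Nat.pow_le_pow_right (Nat.pos_of_ne_zero hp) hsr) hker

def kerNsmulPiEquiv {ι : Type*} (K : ι → Type*) [∀ i, AddCommGroup (K i)] :
    (p • AddMonoidHom.id (∀ i, K i)).ker ≃ ∀ i, (p • AddMonoidHom.id (K i)).ker :=
  (Equiv.subtypeEquivRight (q := fun x : ∀ i, K i => ∀ i, x i ∈ (p • AddMonoidHom.id (K i)).ker)
    fun _ => funext_iff).trans Equiv.subtypePiEquivPi

theorem card_ker_nsmul_fun (ι K : Type*) [Fintype ι] [AddCommGroup K] :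
    Nat.card (p • AddMonoidHom.id (ι → K)).ker =
      Nat.card (p • AddMonoidHom.id K).ker ^ Fintype.card ι := by
  rw [Nat.card_congr (kerNsmulPiEquiv p fun _ : ι => K), Nat.card_fun,
    Nat.card_eq_fintype_card (α := ι)]

theorem card_ker_nsmul_addCircle_le {𝕜 : Type*} [Ring 𝕜] [IsAddTorsionFree 𝕜] (a : 𝕜)
    (hp : p ≠ 0) :
    Finite (p • AddMonoidHom.id (AddCircle a)).ker ∧
      Nat.card (p • AddMonoidHom.id (AddCircle a)).ker ≤ p := by
  have hreg : IsSMulRegular 𝕜 p := nsmul_right_injective hp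
  refine ⟨AddCircle.finite_torsion_of_isSMulRegular a p hreg, ?_⟩
  have := AddCircle.card_torsion_le_of_isSMulRegular a p hp hreg
  change Nat.card {x : AddCircle a | p • x = 0} ≤ p
  rw [Nat.card_coe_set_eq, Set.ncard_def]
  exact ENat.toNat_le_of_le_natCast this

theorem card_ker_nsmul_le_of_torsion_injective (hp : p ≠ 0) (f : AddCommGroup.torsion G →+ H)
    (hf : Function.Injective f) [Finite (p • AddMonoidHom.id H).ker] :
    Finite (p • AddMonoidHom.id G).ker ∧
      Nat.card (p • AddMonoidHom.id G).ker ≤ Nat.card (p • AddMonoidHom.id H).ker := by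
  have hle : (p • AddMonoidHom.id G).ker ≤ AddCommGroup.torsion G := fun x hx =>
    isOfFinAddOrder_iff_nsmul_eq_zero.2 ⟨p, Nat.pos_of_ne_zero hp, hx⟩
  let g : (p • AddMonoidHom.id G).ker → (p • AddMonoidHom.id H).ker := fun x =>
    ⟨f ⟨x, hle x.2⟩, (map_nsmul f p _).symm.trans
      ((congrArg f (Subtype.ext x.2 : p • (⟨x, hle x.2⟩ : AddCommGroup.torsion G) = 0)).trans
        (map_zero f))⟩
  have hg : Function.Injective g := fun x y hxy =>
    Subtype.ext <|
      congrArg (fun z : AddCommGroup.torsion G => (z : G)) (hf (congrArg Subtype.val hxy))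
  exact ⟨Finite.of_injective g hg, Nat.card_le_card_of_injective g hg⟩

end NsmulKerRange

theorem card_quot_le_pow_mul_card_torsion_general {p n r : ℕ} (hp : p.Prime)
    {Γ : Type*} [AddCommGroup Γ]
    (f : AddCommGroup.torsion Γ →+ (Fin n → AddCircle (1 : ℚ)))
    (hf : Function.Injective f)
    (hr : Module.rank ℚ (ℚ ⊗[ℤ] Γ) = r) :
    Finite (Γ ⧸ (p • AddMonoidHom.id Γ).range) ∧
      Nat.card (Γ ⧸ (p • AddMonoidHom.id Γ).range) ≤
        p ^ r * Nat.card ((p • AddMonoidHom.id Γ).ker) ∧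
      p ^ r * Nat.card ((p • AddMonoidHom.id Γ).ker) ≤ p ^ (n + r) := by
  have hp0 := hp.ne_zero
  obtain ⟨_, hcircle_card⟩ := card_ker_nsmul_addCircle_le p (1 : ℚ) hp0
  have : Finite (p • AddMonoidHom.id (Fin n → AddCircle (1 : ℚ))).ker :=
    Finite.of_equiv _ (kerNsmulPiEquiv p _).symm
  obtain ⟨_, hker_card⟩ := card_ker_nsmul_le_of_torsion_injective p hp0 f hf
  have hrank : Module.rank ℤ Γ = r := by
    simpa [rank_fractionRing_tensorProduct] using hr
  obtain ⟨hfin, hcard⟩ := finite_quotient_range_nsmul_of_rank_le p hp0 hrank.le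
  refine ⟨hfin, hcard, ?_⟩
  calc p ^ r * Nat.card (p • AddMonoidHom.id Γ).ker ≤ p ^ r * p ^ n := by
        rw [card_ker_nsmul_fun, Fintype.card_fin] at hker_card
        exact Nat.mul_le_mul_left _ (hker_card.trans (Nat.pow_le_pow_left hcircle_card n))
    _ = p ^ (n + r) := by ring

/-- Let `p` be a prime and `Γ` an abelian group whose torsion subgroup embeds into
`(ℚ/ℤ)ⁿ` (`n ≥ 1`) and with `dim_ℚ (Γ ⊗_ℤ ℚ) = r`. Then `Γ/pΓ` is finite and
`#(Γ/pΓ) ≤ p^r · #(Γ[p]) ≤ p^(n+r)`. -/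
theorem card_quot_le_pow_mul_card_torsion {p n r : ℕ} (hp : p.Prime) (hn : 0 < n)
    {Γ : Type*} [AddCommGroup Γ]
    (f : AddCommGroup.torsion Γ →+ (Fin n → AddCircle (1 : ℚ)))
    (hf : Function.Injective f)
    (hr : Module.rank ℚ (ℚ ⊗[ℤ] Γ) = r) :
    Finite (Γ ⧸ (p • AddMonoidHom.id Γ).range) ∧
      Nat.card (Γ ⧸ (p • AddMonoidHom.id Γ).range) ≤
        p ^ r * Nat.card ((p • AddMonoidHom.id Γ).ker) ∧
      p ^ r * Nat.card ((p • AddMonoidHom.id Γ).ker) ≤ p ^ (n + r) :=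
  card_quot_le_pow_mul_card_torsion_general hp f hf hr
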